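/- (Conditional exchangeability under uniform selection.) If the pFS procedure uses ρ(γ) = h(|γ|) and uniform selection λ_j(γ) = 1(γ_j = 0)/(p - |γ|), then conditional on the final model size |γ_(p)| = s, the final model γ_(p) is uniformly distributed over all C(p, s) models of size s; hence P(γ_(p) = γ) = [h(|γ|)∏_{r=0}^{|γ|-1}(1-h(r))] / C(p, |γ|) for |γ| < p. -/

import Mathlib

open Finset

attribute [local instance] Classical.propDecidable

noncomputable section

/-- A model is an inclusion-indicator vector in `{0,1}^p`. -/
abbrev Model (p : ℕ) := Fin p → Bool

/-- Model size `|γ|`: the number of included variables. -/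
def msize {p : ℕ} (γ : Model p) : ℕ := (Finset.univ.filter (fun j => γ j = true)).card

/-- `γ^{+j}` : the model `γ` with variable `j` added. -/
def mplus {p : ℕ} (γ : Model p) (j : Fin p) : Model p := Function.update γ j true

/-- The null model. -/
def mnull (p : ℕ) : Model p := fun _ => false

/-- A sequence of decision variables `(S_t, J_t)`, `t = 1, …, p`. -/
abbrev Dec (p : ℕ) := Fin p → Bool × Fin p

/-- The tentative model `γ_(t)` determined by the decisions `d`. -/
def tent {p : ℕ} (d : Dec p) : ℕ → Model p
  | 0 => mnull p
  | t + 1 =>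
    if h : t < p then
      if (d ⟨t, h⟩).1 = true then tent d t
      else mplus (tent d t) (d ⟨t, h⟩).2
    else tent d t

/-- The procedure has stopped strictly before step `t+1`, i.e. some `S_s = 1` with `s ≤ t`. -/
def stopB {p : ℕ} (d : Dec p) (t : ℕ) : Prop :=
  ∃ s : Fin p, (s : ℕ) < t ∧ (d s).1 = true

/-- Probability of the `t`-th pair of decisions of a pFS procedure with stopping map `ρ`
and selection map `lam` (once stopped, the stopping indicator stays 1 with probability 1;
the selection variable is always drawn from the multinomial with weights `lam`). -/
def stepProb {p : ℕ} (ρ : Model p → ℝ) (lam : Model p → Fin p → ℝ)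
    (d : Dec p) (t : Fin p) : ℝ :=
  (if stopB d (t : ℕ) then (if (d t).1 = true then 1 else 0)
   else if (d t).1 = true then ρ (tent d (t : ℕ)) else 1 - ρ (tent d (t : ℕ)))
  * lam (tent d (t : ℕ)) (d t).2

/-- Probability of a whole decision sequence under the pFS procedure `(ρ, lam)`. -/
def pathProb {p : ℕ} (ρ : Model p → ℝ) (lam : Model p → Fin p → ℝ) (d : Dec p) : ℝ :=
  ∏ t : Fin p, stepProb ρ lam d t

/-- Marginal probability that the final model `γ_(p)` equals `γ`. -/
def finalProb {p : ℕ} (ρ : Model p → ℝ) (lam : Model p → Fin p → ℝ) (γ : Model p) : ℝ :=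
  ∑ d : Dec p, if tent d p = γ then pathProb ρ lam d else 0

/-- Marginal probability that the final model has size `s`. -/
def sizeProb {p : ℕ} (ρ : Model p → ℝ) (lam : Model p → Fin p → ℝ) (s : ℕ) : ℝ :=
  ∑ d : Dec p, if msize (tent d p) = s then pathProb ρ lam d else 0

/-- Validity of a stopping-probability map: values in `[0,1]` on non-full models. -/
def ValidStop {p : ℕ} (ρ : Model p → ℝ) : Prop :=
  ∀ γ : Model p, msize γ < p → 0 ≤ ρ γ ∧ ρ γ ≤ 1

/-- Validity of a selection-probability map: nonnegative, summing to one, and vanishing on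
already-included variables, on non-full models. -/
def ValidSel {p : ℕ} (lam : Model p → Fin p → ℝ) : Prop :=
  ∀ γ : Model p, msize γ < p →
    (∀ j, 0 ≤ lam γ j) ∧ (∑ j, lam γ j) = 1 ∧ (∀ j, γ j = true → lam γ j = 0)

/-- `(ρ, lam)` specify a valid pFS procedure. -/
def IsPFS {p : ℕ} (ρ : Model p → ℝ) (lam : Model p → Fin p → ℝ) : Prop :=
  ValidStop ρ ∧ ValidSel lam

/-- The Markov transition kernel of the pFS chain at step `t` (from `γ_(t-1)` to `γ_(t)`). -/
def kernel {p : ℕ} (ρ : Model p → ℝ) (lam : Model p → Fin p → ℝ)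
    (t : ℕ) (γ γ' : Model p) : ℝ :=
  if msize γ < t - 1 then (if γ' = γ then 1 else 0)
  else if msize γ = t - 1 then
    (if γ' = γ then ρ γ
     else ∑ j ∈ Finset.univ.filter (fun j => γ j = false ∧ γ' = mplus γ j), (1 - ρ γ) * lam γ j)
  else 0

/-- Size-dependent stopping map `ρ(γ) = h(|γ|)`. -/
def rhoH {p : ℕ} (h : ℕ → ℝ) : Model p → ℝ := fun γ => h (msize γ)

/-- Uniform selection among excluded variables: `λ_j(γ) = 1(γ_j = 0)/(p - |γ|)`. -/
def lamUnif {p : ℕ} : Model p → Fin p → ℝ :=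
  fun γ j => if γ j = true then 0 else ((p : ℝ) - (msize γ : ℝ))⁻¹

/-!
The pFS run is a Markov chain on pairs (current model, stopped flag), so the probability of
ending at `γ₀` can be computed by backward recursion over the remaining steps. From an active
model `γ ≤ γ₀` the chain can only reach `γ₀` by adding its missing variables one at a time and
then stopping. At an active model `γ'` exactly `|γ₀| - |γ'|` of the `p - |γ'|` excluded
variables are useful, so the selection probabilities multiply to `1 / C(p - |γ|, |γ₀| - |γ|)`,
while the stopping factors `h(|γ₀|) ∏ (1 - h r)` depend only on sizes. Starting from the null
model this is the closed formula, which depends on `γ₀` only through `|γ₀|`; summing over the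
`C(p, s)` models of size `s` gives the conditional law.
-/

section Model

variable {p : ℕ}

lemma msize_le (γ : Model p) : msize γ ≤ p := by
  simpa [msize] using card_filter_le univ (fun j => γ j = true)

lemma msize_mnull : msize (mnull p) = 0 := by
  simp [msize, mnull]

lemma msize_mplus {γ : Model p} {j : Fin p} (hj : γ j = false) :
    msize (mplus γ j) = msize γ + 1 := by
  have : univ.filter (fun i => mplus γ j i = true) = insert j (univ.filter (γ · = true)) := by
    ext i
    simp only [mem_filter]
    by_cases hij : i = j <;> simp [mplus, hij]
  rw [msize, this, card_insert_of_notMem (by simp [hj]), msize]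

lemma le_mplus (γ : Model p) (j : Fin p) : γ ≤ mplus γ j :=
  le_update_iff.2 ⟨Bool.le_true _, fun _ _ => le_rfl⟩

lemma mplus_le_iff {γ γ' : Model p} {j : Fin p} :
    mplus γ j ≤ γ' ↔ γ ≤ γ' ∧ γ' j = true := by
  rw [mplus, update_le_iff]
  constructor
  · rintro ⟨hj, hle⟩
    have hj : γ' j = true := Bool.le_iff_imp.1 hj rfl
    refine ⟨fun i => ?_, hj⟩
    by_cases hij : i = j
    · simp [hij, hj]
    · exact hle i hij
  · rintro ⟨hle, hj⟩
    exact ⟨by simp [hj], fun i _ => hle i⟩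

lemma filter_subset_filter_of_le {γ γ' : Model p} (hle : γ ≤ γ') :
    univ.filter (γ · = true) ⊆ univ.filter (γ' · = true) := by
  intro j
  simpa using Bool.le_iff_imp.1 (hle j)

lemma msize_mono : Monotone (msize (p := p)) :=
  fun _ _ hle => card_le_card (filter_subset_filter_of_le hle)

lemma eq_of_le_of_msize_le {γ γ' : Model p} (hle : γ ≤ γ') (hsz : msize γ' ≤ msize γ) :
    γ = γ' := by
  have hsupp := eq_of_subset_of_card_le (filter_subset_filter_of_le hle) hsz
  funext j
  have hj := Finset.ext_iff.1 hsupp j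
  simp only [mem_filter, mem_univ, true_and] at hj
  exact Bool.eq_iff_iff.2 hj

lemma eq_top_of_msize_eq {γ : Model p} (hγ : msize γ = p) : γ = ⊤ :=
  eq_of_le_of_msize_le le_top (by rw [hγ]; simp [msize])

lemma card_filter_false_and_true_of_le {γ γ' : Model p} (hle : γ ≤ γ') :
    #{j | γ j = false ∧ γ' j = true} = msize γ' - msize γ := by
  rw [msize, msize, ← card_sdiff_of_subset (filter_subset_filter_of_le hle)]
  congr 1
  ext j
  simp [and_comm]

lemma card_filter_msize_eq (s : ℕ) : #{γ : Model p | msize γ = s} = p.choose s := by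
  rw [show p.choose s = #(powersetCard s (univ : Finset (Fin p))) by simp]
  refine card_nbij' (fun γ => univ.filter (γ · = true)) (fun S j => decide (j ∈ S)) ?_ ?_ ?_ ?_
  · intro γ hγ
    rw [mem_coe, mem_filter] at hγ
    simpa [mem_powersetCard, msize] using hγ.2
  · intro S hS
    rw [mem_coe, mem_filter]
    simpa [mem_powersetCard, msize] using hS
  · intro γ _
    funext j
    simp
  · intro S _
    ext j
    simp

end Model

section UniformSelection

variable {p : ℕ}

lemma card_filter_eq_false (γ : Model p) : #{j | γ j = false} = p - msize γ := by
  have := card_filter_add_card_filter_not (s := univ) (fun j => γ j = true)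
  simp only [card_univ, Fintype.card_fin, Bool.not_eq_true] at this
  rw [msize]
  omega

lemma sum_lamUnif_mul (γ : Model p) (f : Fin p → ℝ) :
    ∑ j, lamUnif γ j * f j = ((p : ℝ) - msize γ)⁻¹ * ∑ j ∈ univ.filter (γ · = false), f j := by
  rw [mul_sum, sum_filter]
  refine sum_congr rfl fun j _ => ?_
  cases hj : γ j <;> simp [lamUnif, hj]

lemma sum_lamUnif {γ : Model p} (hlt : msize γ < p) : ∑ j, lamUnif γ j = 1 := by
  have hne : (p : ℝ) - msize γ ≠ 0 := sub_ne_zero.2 (by exact_mod_cast hlt.ne')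
  simpa [sum_const, card_filter_eq_false, Nat.cast_sub hlt.le, hne] using
    sum_lamUnif_mul γ (fun _ => 1)

end UniformSelection

section Trajectory

variable {X S R : Type*}

def trajectory {n : ℕ} (step : S → X → S) (init : S) (d : Fin n → X) : ℕ → S
  | 0 => init
  | t + 1 =>
    if h : t < n then step (trajectory step init d t) (d ⟨t, h⟩) else trajectory step init d t

def backwardValue [Fintype X] [CommSemiring R] (w : S → X → R) (step : S → X → S) (g : S → R) :
    ℕ → S → R
  | 0, s => g s
  | n + 1, s => ∑ x : X, w s x * backwardValue w step g n (step s x)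

lemma trajectory_cons {n : ℕ} (step : S → X → S) (init : S) (x : X) (d : Fin n → X) (t : ℕ) :
    trajectory step init (Fin.cons x d : Fin (n + 1) → X) (t + 1) =
      trajectory step (step init x) d t := by
  induction t with
  | zero => simp [trajectory]
  | succ t ih =>
    by_cases ht : t < n
    · rw [trajectory, dif_pos (Nat.succ_lt_succ ht), ih, trajectory, dif_pos ht]
      rfl
    · rw [trajectory, dif_neg (by omega), ih, trajectory, dif_neg ht]

theorem sum_prod_weight_trajectory [Fintype X] [CommSemiring R] (w : S → X → R)
    (step : S → X → S) (g : S → R) (n : ℕ) (init : S) :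
    ∑ d : Fin n → X, (∏ t : Fin n, w (trajectory step init d t) (d t)) *
        g (trajectory step init d n) = backwardValue w step g n init := by
  induction n generalizing init with
  | zero => simp [trajectory, backwardValue]
  | succ n ih =>
    rw [← (Fin.consEquiv fun _ => X).sum_comp, Fintype.sum_prod_type, backwardValue]
    refine sum_congr rfl fun x _ => ?_
    rw [← ih, mul_sum]
    refine sum_congr rfl fun d _ => ?_
    rw [show (Fin.consEquiv fun _ => X) (x, d) = Fin.cons x d from rfl, Fin.prod_univ_succ,
      trajectory_cons]
    simp only [Fin.cons_zero, Fin.cons_succ, Fin.val_zero, Fin.val_succ, trajectory_cons]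
    rw [trajectory, mul_assoc]

end Trajectory

section Chain

variable {p : ℕ}

-- States of the pFS chain are pairs (current model, stopped flag).
def pfsStep : Model p × Bool → Bool × Fin p → Model p × Bool :=
  fun s x => (if x.1 then s.1 else mplus s.1 x.2, s.2 || x.1)

def pfsWeight (ρ : Model p → ℝ) (lam : Model p → Fin p → ℝ) : Model p × Bool → Bool × Fin p → ℝ :=
  fun s x =>
    (if s.2 then (if x.1 then 1 else 0) else if x.1 then ρ s.1 else 1 - ρ s.1) * lam s.1 x.2

lemma stopB_succ (d : Dec p) {t : ℕ} (ht : t < p) :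
    stopB d (t + 1) ↔ stopB d t ∨ (d ⟨t, ht⟩).1 = true := by
  simp only [stopB, Nat.lt_succ_iff_lt_or_eq, or_and_right, exists_or]
  refine or_congr Iff.rfl ⟨fun ⟨s, hs, hd⟩ => ?_, fun hd => ⟨⟨t, ht⟩, rfl, hd⟩⟩
  rwa [show s = ⟨t, ht⟩ from Fin.ext hs] at hd

lemma stopB_succ_of_le (d : Dec p) {t : ℕ} (ht : p ≤ t) : stopB d (t + 1) ↔ stopB d t := by
  simp only [stopB]
  exact exists_congr fun s => and_congr_left fun _ => by omega

lemma trajectory_pfsStep (d : Dec p) (t : ℕ) :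
    trajectory pfsStep (mnull p, false) d t = (tent d t, decide (stopB d t)) := by
  induction t with
  | zero => simp [trajectory, tent, stopB]
  | succ t ih =>
    by_cases ht : t < p
    · rw [trajectory, dif_pos ht, ih, tent, dif_pos ht, pfsStep]
      simp [stopB_succ d ht]
    · rw [trajectory, dif_neg ht, ih, tent, dif_neg ht, stopB_succ_of_le d (not_lt.1 ht)]

lemma finalProb_eq_backwardValue (ρ : Model p → ℝ) (lam : Model p → Fin p → ℝ) (γ : Model p) :
    finalProb ρ lam γ = backwardValue (pfsWeight ρ lam) pfsStep
      (fun s => if s.1 = γ then 1 else 0) p (mnull p, false) := by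
  rw [finalProb, ← sum_prod_weight_trajectory]
  refine sum_congr rfl fun d _ => ?_
  have hstep : ∀ t : Fin p, stepProb ρ lam d t =
      pfsWeight ρ lam (trajectory pfsStep (mnull p, false) d t) (d t) := by
    intro t
    simp [stepProb, pfsWeight, trajectory_pfsStep]
  simp only [pathProb, hstep, trajectory_pfsStep]
  split_ifs <;> simp

end Chain

section Reach

variable {p : ℕ} {ρ : Model p → ℝ} {lam : Model p → Fin p → ℝ} {γ₀ : Model p}

def reachProb (ρ : Model p → ℝ) (lam : Model p → Fin p → ℝ) (γ₀ : Model p) :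
    ℕ → Model p × Bool → ℝ :=
  backwardValue (pfsWeight ρ lam) pfsStep (fun s => if s.1 = γ₀ then 1 else 0)

lemma finalProb_eq_reachProb (ρ : Model p → ℝ) (lam : Model p → Fin p → ℝ) (γ₀ : Model p) :
    finalProb ρ lam γ₀ = reachProb ρ lam γ₀ p (mnull p, false) :=
  finalProb_eq_backwardValue ρ lam γ₀

lemma reachProb_succ_stopped (n : ℕ) (γ : Model p) :
    reachProb ρ lam γ₀ (n + 1) (γ, true) = (∑ j, lam γ j) * reachProb ρ lam γ₀ n (γ, true) := by
  simp [reachProb, backwardValue, Fintype.sum_prod_type, pfsWeight, pfsStep, sum_mul]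

lemma reachProb_succ_active (n : ℕ) (γ : Model p) :
    reachProb ρ lam γ₀ (n + 1) (γ, false) =
      ∑ j, lam γ j * (ρ γ * reachProb ρ lam γ₀ n (γ, true) +
        (1 - ρ γ) * reachProb ρ lam γ₀ n (mplus γ j, false)) := by
  simp only [reachProb, backwardValue, Fintype.sum_prod_type, Fintype.sum_bool, ← sum_add_distrib]
  refine sum_congr rfl fun j _ => ?_
  simp only [pfsWeight, pfsStep, if_true, Bool.false_eq_true, if_false, Bool.false_or]
  ring

lemma reachProb_stopped {γ : Model p} (hlam : ∑ j, lam γ j = 1) (n : ℕ) :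
    reachProb ρ lam γ₀ n (γ, true) = if γ = γ₀ then 1 else 0 := by
  induction n with
  | zero => rfl
  | succ n ih => rw [reachProb_succ_stopped, hlam, one_mul, ih]

lemma reachProb_eq_zero_of_not_le (n : ℕ) : ∀ s : Model p × Bool, ¬ s.1 ≤ γ₀ →
    reachProb ρ lam γ₀ n s = 0 := by
  induction n with
  | zero =>
    intro s hs
    simp [reachProb, backwardValue, show s.1 ≠ γ₀ from fun h => hs h.le]
  | succ n ih =>
    intro s hs
    show ∑ x, pfsWeight ρ lam s x * reachProb ρ lam γ₀ n (pfsStep s x) = 0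
    refine sum_eq_zero fun x _ => ?_
    have hle : s.1 ≤ (pfsStep s x).1 := by
      unfold pfsStep
      split_ifs
      exacts [le_rfl, le_mplus _ _]
    rw [ih _ fun h => hs (hle.trans h), mul_zero]

end Reach

lemma inv_choose_succ_succ {q k : ℕ} (hkq : k ≤ q) :
    (((q + 1).choose (k + 1) : ℕ) : ℝ)⁻¹ = ((k : ℝ) + 1) / (q + 1) * (q.choose k : ℝ)⁻¹ := by
  have hq : ((q + 1) * q.choose k : ℝ) = (q + 1).choose (k + 1) * (k + 1) := by
    exact_mod_cast Nat.add_one_mul_choose_eq q k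
  have hc : (q.choose k : ℝ) ≠ 0 := by exact_mod_cast (Nat.choose_pos hkq).ne'
  have hc' : ((q + 1).choose (k + 1) : ℝ) ≠ 0 := by
    exact_mod_cast (Nat.choose_pos (Nat.succ_le_succ hkq)).ne'
  field_simp
  linarith

section UniformStop

variable {p : ℕ} (h : ℕ → ℝ) {γ₀ : Model p}

lemma reachProb_rhoH_lamUnif_succ_self (hs : msize γ₀ < p) (n : ℕ) :
    reachProb (rhoH h) lamUnif γ₀ (n + 1) (γ₀, false) = h (msize γ₀) := by
  have hterm : ∀ j ∈ univ.filter (γ₀ · = false),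
      rhoH h γ₀ * 1 + (1 - rhoH h γ₀) * reachProb (rhoH h) lamUnif γ₀ n (mplus γ₀ j, false) =
        h (msize γ₀) := by
    intro j hj
    have hj : γ₀ j = false := (mem_filter.1 hj).2
    rw [reachProb_eq_zero_of_not_le _ _ fun h' => by simp [(mplus_le_iff.1 h').2] at hj]
    simp [rhoH]
  have hne : (p : ℝ) - msize γ₀ ≠ 0 := sub_ne_zero.2 (by exact_mod_cast hs.ne')
  rw [reachProb_succ_active, sum_lamUnif_mul, reachProb_stopped (sum_lamUnif hs), if_pos rfl,
    sum_congr rfl hterm, sum_const, card_filter_eq_false, nsmul_eq_mul, Nat.cast_sub hs.le,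
    inv_mul_cancel_left₀ hne]

-- Only the `|γ₀| - |γ|` variables of `γ₀` missing from `γ` lead towards `γ₀`.
lemma reachProb_rhoH_lamUnif_succ_of_ne {γ : Model p} (hle : γ ≤ γ₀) (hne : γ ≠ γ₀)
    (hγ : msize γ < p) (n : ℕ) {c : ℝ}
    (hc : ∀ j, γ j = false → γ₀ j = true → reachProb (rhoH h) lamUnif γ₀ n (mplus γ j, false) = c) :
    reachProb (rhoH h) lamUnif γ₀ (n + 1) (γ, false) =
      (1 - h (msize γ)) * (((msize γ₀ - msize γ : ℕ) : ℝ) / (p - msize γ) * c) := by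
  have hterm : ∀ j ∈ univ.filter (γ · = false),
      rhoH h γ * (if γ = γ₀ then 1 else 0) +
          (1 - rhoH h γ) * reachProb (rhoH h) lamUnif γ₀ n (mplus γ j, false) =
        if γ₀ j = true then (1 - h (msize γ)) * c else 0 := by
    intro j hj
    have hj : γ j = false := (mem_filter.1 hj).2
    by_cases hj0 : γ₀ j = true
    · simp [hc j hj hj0, hne, rhoH, hj0]
    · rw [reachProb_eq_zero_of_not_le _ _ fun h' => hj0 (mplus_le_iff.1 h').2]
      simp [hne, hj0]
  rw [reachProb_succ_active, sum_lamUnif_mul, reachProb_stopped (sum_lamUnif hγ),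
    sum_congr rfl hterm, ← sum_filter, filter_filter, sum_const,
    card_filter_false_and_true_of_le hle, nsmul_eq_mul]
  ring

theorem reachProb_rhoH_lamUnif (hs : msize γ₀ < p) (n : ℕ) :
    ∀ γ : Model p, γ ≤ γ₀ → msize γ₀ - msize γ < n →
      reachProb (rhoH h) lamUnif γ₀ n (γ, false) =
        h (msize γ₀) * (∏ r ∈ Ico (msize γ) (msize γ₀), (1 - h r)) /
          (p - msize γ).choose (msize γ₀ - msize γ) := by
  induction n with
  | zero => intro γ _ hn; omega
  | succ n ih =>
    intro γ hle hn
    by_cases heq : γ = γ₀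
    · subst heq
      simp [reachProb_rhoH_lamUnif_succ_self h hs]
    have hlt : msize γ < msize γ₀ :=
      (msize_mono hle).lt_of_ne fun hsz => heq (eq_of_le_of_msize_le hle hsz.ge)
    obtain ⟨k, hk⟩ : ∃ k, msize γ₀ - msize γ = k + 1 := ⟨msize γ₀ - msize γ - 1, by omega⟩
    obtain ⟨q, hq⟩ : ∃ q, p - msize γ = q + 1 := ⟨p - msize γ - 1, by omega⟩
    have hcast : (p : ℝ) - msize γ = q + 1 := by
      rw [← Nat.cast_sub (hlt.trans hs).le, hq, Nat.cast_succ]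
    rw [reachProb_rhoH_lamUnif_succ_of_ne h hle heq (hlt.trans hs) n (c :=
        h (msize γ₀) * (∏ r ∈ Ico (msize γ + 1) (msize γ₀), (1 - h r)) / q.choose k),
      hk, hq, hcast, prod_eq_prod_Ico_succ_bot hlt, div_eq_mul_inv _ ((q + 1).choose (k + 1) : ℝ),
      inv_choose_succ_succ (by omega)]
    · push_cast
      ring
    · intro j hj hj0
      rw [ih (mplus γ j) (mplus_le_iff.2 ⟨hle, hj0⟩) (by rw [msize_mplus hj]; omega),
        msize_mplus hj, show p - (msize γ + 1) = q by omega,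
        show msize γ₀ - (msize γ + 1) = k by omega]

theorem finalProb_rhoH_lamUnif {γ : Model p} (hγ : msize γ < p) :
    finalProb (rhoH h) lamUnif γ =
      h (msize γ) * (∏ r ∈ range (msize γ), (1 - h r)) / p.choose (msize γ) := by
  rw [finalProb_eq_reachProb, reachProb_rhoH_lamUnif h hγ p (mnull p) (fun _ => Bool.false_le _)
    (by omega), msize_mnull, range_eq_Ico, Nat.sub_zero, Nat.sub_zero]

-- The full model is the only one of size `p`, where the closed formula does not apply.
theorem finalProb_rhoH_lamUnif_congr {γ₁ γ₂ : Model p} (hsz : msize γ₁ = msize γ₂) :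
    finalProb (rhoH h) lamUnif γ₁ = finalProb (rhoH h) lamUnif γ₂ := by
  rcases (msize_le γ₁).lt_or_eq with hlt | hfull
  · rw [finalProb_rhoH_lamUnif h hlt, finalProb_rhoH_lamUnif h (hsz ▸ hlt), hsz]
  · rw [eq_top_of_msize_eq hfull, eq_top_of_msize_eq (hsz.symm.trans hfull)]

end UniformStop

lemma sizeProb_eq_sum_finalProb {p : ℕ} (ρ : Model p → ℝ) (lam : Model p → Fin p → ℝ) (s : ℕ) :
    sizeProb ρ lam s = ∑ γ ∈ univ.filter (msize · = s), finalProb ρ lam γ := by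
  simp only [sizeProb, finalProb]
  rw [sum_comm]
  refine sum_congr rfl fun d _ => ?_
  rw [sum_ite_eq]
  simp

lemma sizeProb_msize_eq_choose_mul {p : ℕ} {ρ : Model p → ℝ} {lam : Model p → Fin p → ℝ}
    (γ : Model p)
    (hexch : ∀ γ' : Model p, msize γ' = msize γ → finalProb ρ lam γ' = finalProb ρ lam γ) :
    sizeProb ρ lam (msize γ) = p.choose (msize γ) * finalProb ρ lam γ := by
  rw [sizeProb_eq_sum_finalProb, sum_congr rfl fun γ' hγ' => hexch γ' (mem_filter.1 hγ').2,
    sum_const, card_filter_msize_eq, nsmul_eq_mul]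

theorem uniform_selection_exchangeable_general {p : ℕ} (h : ℕ → ℝ) :
    (∀ γ₁ γ₂ : Model p, msize γ₁ = msize γ₂ →
      finalProb (rhoH h) lamUnif γ₁ = finalProb (rhoH h) lamUnif γ₂) ∧
    (∀ γ : Model p, sizeProb (p := p) (rhoH h) lamUnif (msize γ) ≠ 0 →
      finalProb (rhoH h) lamUnif γ / sizeProb (p := p) (rhoH h) lamUnif (msize γ)
        = ((p.choose (msize γ) : ℝ))⁻¹) ∧
    (∀ γ : Model p, msize γ < p →
      finalProb (rhoH h) lamUnif γ
        = (h (msize γ) * ∏ r ∈ Finset.range (msize γ), (1 - h r)) /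
            (p.choose (msize γ) : ℝ)) := by
  refine ⟨fun _ _ => finalProb_rhoH_lamUnif_congr h, fun γ hne => ?_,
    fun _ => finalProb_rhoH_lamUnif h⟩
  rw [sizeProb_msize_eq_choose_mul γ fun _ => finalProb_rhoH_lamUnif_congr h] at hne ⊢
  exact div_mul_cancel_right₀ (right_ne_zero_of_mul hne) _

/-- **Conditional exchangeability under uniform selection.** With size-dependent stopping and
uniform selection, the final model is uniform among models of the same size (conditionally on
its size), and `P(γ_(p) = γ) = h(|γ|)·∏_{r<|γ|}(1-h(r)) / C(p,|γ|)` for `|γ| < p`. -/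
theorem uniform_selection_exchangeable {p : ℕ} (h : ℕ → ℝ)
    (hh : ∀ s < p, 0 ≤ h s ∧ h s ≤ 1) :
    (∀ γ₁ γ₂ : Model p, msize γ₁ = msize γ₂ →
      finalProb (rhoH h) lamUnif γ₁ = finalProb (rhoH h) lamUnif γ₂) ∧
    (∀ γ : Model p, sizeProb (p := p) (rhoH h) lamUnif (msize γ) ≠ 0 →
      finalProb (rhoH h) lamUnif γ / sizeProb (p := p) (rhoH h) lamUnif (msize γ)
        = ((p.choose (msize γ) : ℝ))⁻¹) ∧
    (∀ γ : Model p, msize γ < p →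
      finalProb (rhoH h) lamUnif γ
        = (h (msize γ) * ∏ r ∈ Finset.range (msize γ), (1 - h r)) /
            (p.choose (msize γ) : ℝ)) :=
  uniform_selection_exchangeable_general h
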